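/- Let D = {x ∈ ℝ² : x₂ > 0} and let u : ℝ² → ℝ² be C³ up to the boundary, divergence-free, with u(x₁,0) = 0 for all x₁. Let ω = ∂u²/∂x₁ − ∂u¹/∂x₂ and θ(x₁) = ω(x₁,0). Then at every boundary point, (Δω)(x₁,0) = 2 θ''(x₁) − ∂³u¹/∂x₂³ (x₁,0); equivalently (Δω)|_{∂D} = 2 Δ_Γ θ + (∂/∂𝛎)³ u¹ where ∂/∂𝛎 = −∂/∂x₂. -/

import Mathlib

/-- Partial derivative of a scalar field on `ℝⁿ` in the `i`-th coordinate direction. -/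
noncomputable def pd {n : ℕ} (i : Fin n) (f : (Fin n → ℝ) → ℝ) (x : Fin n → ℝ) : ℝ :=
  fderiv ℝ f x (Pi.single i 1)

/-- The scalar vorticity `ω = ∂u²/∂x₁ − ∂u¹/∂x₂` of a planar vector field. -/
noncomputable def vort2 (u : (Fin 2 → ℝ) → Fin 2 → ℝ) (x : Fin 2 → ℝ) : ℝ :=
  pd 0 (fun y => u y 1) x - pd 1 (fun y => u y 0) x

/-!
Write `f = u¹`, `g = u²`, so that `ω = ∂₁g − ∂₂f`. Since `g` vanishes on the boundary, so do its
tangential derivatives, in particular `∂₁³g`; hence `θ'' = ∂₁²ω = ∂₁³g − ∂₁²∂₂f = −∂₁²∂₂f` there.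
Everywhere, the divergence condition `∂₂g = −∂₁f` and the symmetry of third partial derivatives
give `∂₂²∂₁g = −∂₁²∂₂f`, so `Δω = ∂₁³g − 2∂₁²∂₂f − ∂₂³f`, which on the boundary is `2θ'' − ∂₂³f`.
-/

section PartialDerivatives

variable {n : ℕ} {f g φ ψ : (Fin n → ℝ) → ℝ}

theorem ContDiff.pd {k m : WithTop ℕ∞} (hf : ContDiff ℝ k f) (h : m + 1 ≤ k) (i : Fin n) :
    ContDiff ℝ m (pd i f) :=
  (hf.fderiv_right h).clm_apply contDiff_const

theorem pd_sub (hφ : Differentiable ℝ φ) (hψ : Differentiable ℝ ψ) (i : Fin n) :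
    pd i (φ - ψ) = pd i φ - pd i ψ := by
  funext x
  simp [pd, fderiv_sub (hφ x) (hψ x)]

theorem pd_neg (i : Fin n) : pd i (-φ) = -pd i φ := by
  funext x
  simp [pd, fderiv_neg]

theorem pd_comm (hf : ContDiff ℝ 2 f) (i j : Fin n) : pd i (pd j f) = pd j (pd i f) := by
  funext x
  have hd : DifferentiableAt ℝ (fderiv ℝ f) x :=
    (hf.fderiv_right (m := 1) (by norm_num)).differentiable one_ne_zero x
  have hpd (k l : Fin n) :
      pd k (pd l f) x = fderiv ℝ (fderiv ℝ f) x (Pi.single k 1) (Pi.single l 1) := by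
    unfold pd
    rw [fderiv_clm_apply hd (differentiableAt_const _)]
    simp
  rw [hpd, hpd]
  exact hf.contDiffAt.isSymmSndFDerivAt (by simp) _ _

theorem pd_pd_sub (hφ : ContDiff ℝ 2 φ) (hψ : ContDiff ℝ 2 ψ) (i j : Fin n) :
    pd i (pd j (φ - ψ)) = pd i (pd j φ) - pd i (pd j ψ) := by
  rw [pd_sub (hφ.differentiable two_ne_zero) (hψ.differentiable two_ne_zero),
    pd_sub ((hφ.pd (m := 1) (by norm_num) j).differentiable one_ne_zero)
      ((hψ.pd (m := 1) (by norm_num) j).differentiable one_ne_zero)]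

theorem pd_pd_pd_eq_neg_of_pd_eq_neg (hf : ContDiff ℝ 3 f) (hg : ContDiff ℝ 2 g) {i j : Fin n}
    (h : pd j g = -pd i f) : pd j (pd j (pd i g)) = -pd i (pd i (pd j f)) :=
  calc pd j (pd j (pd i g)) = pd j (pd i (pd j g)) := by rw [pd_comm hg j i]
    _ = -pd j (pd i (pd i f)) := by rw [h, pd_neg, pd_neg]
    _ = -pd i (pd j (pd i f)) := by rw [pd_comm (hf.pd (m := 2) (by norm_num) i) j i]
    _ = -pd i (pd i (pd j f)) := by rw [pd_comm (hf.of_le (by norm_num)) j i]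

end PartialDerivatives

section Boundary

variable {φ : (Fin 2 → ℝ) → ℝ}

theorem deriv_boundary {a : ℝ} (hφ : DifferentiableAt ℝ φ ![a, 0]) :
    deriv (fun c => φ ![c, 0]) a = pd 0 φ ![a, 0] := by
  have hline : (fun c => φ ![c, 0]) = φ ∘ Function.update ![a, 0] 0 := by
    funext c
    congr 1
    funext i
    fin_cases i <;> simp
  rw [hline]
  exact (hφ.hasFDerivAt.comp_hasDerivAt_of_eq a (hasDerivAt_update ![a, 0] 0 a)
    (Function.update_eq_self 0 ![a, 0]).symm).deriv

theorem pd_zero_boundary_eq_zero (hφ : Differentiable ℝ φ) (h : ∀ b, φ ![b, 0] = 0) (b : ℝ) :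
    pd 0 φ ![b, 0] = 0 := by
  rw [← deriv_boundary (hφ _), funext h, deriv_const]

theorem deriv_deriv_boundary (hφ : ContDiff ℝ 2 φ) (a : ℝ) :
    deriv (fun b => deriv (fun c => φ ![c, 0]) b) a = pd 0 (pd 0 φ) ![a, 0] := by
  have hθ' : (fun b => deriv (fun c => φ ![c, 0]) b) = fun b => pd 0 φ ![b, 0] :=
    funext fun b => deriv_boundary (hφ.differentiable two_ne_zero _)
  rw [hθ', deriv_boundary (((hφ.pd (m := 1) (by norm_num) 0).differentiable one_ne_zero) _)]

end Boundary

/-- for a `C³`, divergence-free planar vector field `u` on the upper half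
plane vanishing on the boundary `{x₂ = 0}`, at every boundary point
`(Δω)(x₁,0) = 2 θ''(x₁) − ∂³u¹/∂x₂³(x₁,0)`, where `θ(x₁) = ω(x₁,0)`; equivalently
`(Δω)|_{∂D} = 2 Δ_Γ θ + (∂/∂𝛎)³u¹` with `∂/∂𝛎 = −∂/∂x₂`. -/
theorem boundary_laplacian_vorticity_2d
    (u : (Fin 2 → ℝ) → Fin 2 → ℝ)
    (hu : ContDiff ℝ 3 u)
    (hdiv : ∀ x : Fin 2 → ℝ,
      pd 0 (fun y => u y 0) x + pd 1 (fun y => u y 1) x = 0)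
    (hnoslip : ∀ a : ℝ, u ![a, 0] = 0) :
    ∀ a : ℝ,
      pd 0 (pd 0 (vort2 u)) ![a, 0] + pd 1 (pd 1 (vort2 u)) ![a, 0]
        = 2 * deriv (fun b => deriv (fun c => vort2 u ![c, 0]) b) a
          - pd 1 (pd 1 (pd 1 (fun y => u y 0))) ![a, 0] := by
  intro a
  set f : (Fin 2 → ℝ) → ℝ := fun y => u y 0
  set g : (Fin 2 → ℝ) → ℝ := fun y => u y 1
  have hf : ContDiff ℝ 3 f := contDiff_pi.1 hu 0
  have hg : ContDiff ℝ 3 g := contDiff_pi.1 hu 1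
  have hf₁ : ContDiff ℝ 2 (pd 1 f) := hf.pd (by norm_num) 1
  have hg₁ : ContDiff ℝ 2 (pd 0 g) := hg.pd (by norm_num) 0
  have hω : vort2 u = pd 0 g - pd 1 f := rfl
  have hg_div : pd 1 g = -pd 0 f := funext fun x => eq_neg_of_add_eq_zero_right (hdiv x)
  have hg_boundary : pd 0 (pd 0 (pd 0 g)) ![a, 0] = 0 := by
    refine pd_zero_boundary_eq_zero ((hg₁.pd (m := 1) (by norm_num) 0).differentiable one_ne_zero)
      ?_ a
    refine pd_zero_boundary_eq_zero (hg₁.differentiable two_ne_zero) ?_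
    exact pd_zero_boundary_eq_zero (hg.differentiable three_ne_zero)
      fun b => congrFun (hnoslip b) 1
  rw [deriv_deriv_boundary (φ := vort2 u) (hg₁.sub hf₁), hω,
    pd_pd_sub hg₁ hf₁ 0 0, pd_pd_sub hg₁ hf₁ 1 1,
    pd_pd_pd_eq_neg_of_pd_eq_neg hf (hg.of_le (by norm_num)) hg_div]
  simp only [Pi.sub_apply, Pi.neg_apply, hg_boundary]
  ring
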